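/- Let β*, x ∈ ℝ^d with ‖x‖₂ ≤ b_x, set y = x^⊤β* and c₁ = ‖β*‖₁. Let K ≥ 1 be an integer, γ ∈ (0, 3/2), r = 1 − (2/3)γ ∈ (0,1], and let S ≥ 1, c > 0, δ ∈ (0,1), with b = 2γ(2S−1)·√((log d + log S − log δ)/c). Let n > N₀ ≥ 1 be integers, p ∈ (0,1], and suppose m = np − p/2 is a positive integer with m ≤ n − N₀. Let β_1,…,β_n ∈ ℝ^d with ‖β_j‖₂ ≤ C_x for all j, and assume: (a) ‖β* − β_j‖₁ ≤ c₁ (r + b/√j)^K for every j > N₀; (b) (K−1)·b/√N₀ < r, and set η = r/(r − (K−1)b/√N₀); (c) the set J = { j ∈ {1,…,n} : x^⊤β_j ≥ B′ } satisfies J ∩ {1,…,N₀} = ∅ and | |J| − m | ≤ ε, where ε = K√(np)·r^K and B′ ∈ ℝ. Then the linear read-out prediction ŷ = (1/m) Σ_{j∈J} (x^⊤β_j − B′) + B′ satisfies |y − ŷ| ≤ c₁ b_x r^K + (c₄ K/√n) r^{K−1}, where c₄ = ( 2√2 · b_x c₁ η · 2γ(2S−1)√((log d + log S − log δ)/c)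 + 2 b_x C_x + 2|B′| ) / √p. -/

import Mathlib

/-!
For every retained index `j > N₀` the prediction error is
`|y - x·β_j| ≤ bx ‖β⋆ - β_j‖₁ ≤ bx c₁ (r + b/√j)^K`. The mean value bound for `t ↦ t^K`,
together with `(r + s₀)^(K-1) (r - (K-1) s₀) ≤ r^K` at `s₀ = b/√N₀`, linearises this to
`A + G/√j` with `A = c₁ bx r^K` and `G = K η bx c₁ b r^(K-1)`; summing over at most `m` indices
then costs only `G ∑ 1/√j ≤ 2 G √m`. The readout differs from an average of `m` such errors by
the `||J| - m| ≤ ε` surplus or missing terms, each costing at most `bx Cx + |B'|` more.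
Finally `np ≤ 2m` makes both `2G/√m` and `ε (bx Cx + |B'|)/m` of order `K r^(K-1) / √(np)`.
-/

/-- Euclidean norm on ℝ^d. -/
noncomputable def l2 {d : ℕ} (v : Fin d → ℝ) : ℝ := Real.sqrt (∑ i, (v i) ^ 2)

/-- ℓ₁ norm on ℝ^d. -/
noncomputable def l1 {d : ℕ} (v : Fin d → ℝ) : ℝ := ∑ i, |v i|

open Finset

lemma add_pow_mul_sub_le_pow_succ (M : ℕ) {r s : ℝ} (hr : 0 ≤ r) (hs : 0 ≤ s) :
    (r + s) ^ M * (r - M * s) ≤ r ^ (M + 1) := by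
  induction M with
  | zero => simp
  | succ M ih =>
    calc (r + s) ^ (M + 1) * (r - (M + 1 : ℕ) * s)
        = r * ((r + s) ^ M * (r - M * s)) - (M + 1) * s ^ 2 * (r + s) ^ M := by
          push_cast; ring
      _ ≤ r * ((r + s) ^ M * (r - M * s)) := sub_le_self _ (by positivity)
      _ ≤ r * r ^ (M + 1) := mul_le_mul_of_nonneg_left ih hr
      _ = r ^ (M + 1 + 1) := (pow_succ' r _).symm

lemma add_pow_le_pow_add_mul {K : ℕ} (hK : 1 ≤ K) {r s s₀ : ℝ} (hr : 0 ≤ r) (hs : 0 ≤ s)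
    (hss₀ : s ≤ s₀) (hs₀ : ((K : ℝ) - 1) * s₀ < r) :
    (r + s) ^ K ≤ r ^ K + K * (r / (r - ((K : ℝ) - 1) * s₀)) * s * r ^ (K - 1) := by
  have hK' : ((K - 1 : ℕ) : ℝ) = K - 1 := by rw [Nat.cast_sub hK, Nat.cast_one]
  have hmv : (r + s) ^ K - r ^ K ≤ s * K * (r + s) ^ (K - 1) :=
    calc (r + s) ^ K - r ^ K ≤ |(r + s) ^ K - r ^ K| := le_abs_self _
      _ ≤ |r + s - r| * K * max |r + s| |r| ^ (K - 1) := abs_pow_sub_pow_le _ _ _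
      _ = s * K * (r + s) ^ (K - 1) := by
        rw [add_sub_cancel_left, abs_of_nonneg hs, abs_of_nonneg (by positivity),
          abs_of_nonneg hr, max_eq_left (by linarith)]
  have hη : (r + s) ^ (K - 1) ≤ r / (r - ((K : ℝ) - 1) * s₀) * r ^ (K - 1) := by
    rw [div_mul_eq_mul_div, le_div_iff₀ (sub_pos.2 hs₀)]
    calc (r + s) ^ (K - 1) * (r - ((K : ℝ) - 1) * s₀)
        ≤ (r + s₀) ^ (K - 1) * (r - ((K : ℝ) - 1) * s₀) := by gcongr
      _ ≤ r ^ (K - 1 + 1) := by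
        simpa only [hK'] using add_pow_mul_sub_le_pow_succ (K - 1) hr (hs.trans hss₀)
      _ = r * r ^ (K - 1) := pow_succ' r _
  calc (r + s) ^ K ≤ r ^ K + s * K * (r + s) ^ (K - 1) := by linarith
    _ ≤ r ^ K + s * K * (r / (r - ((K : ℝ) - 1) * s₀) * r ^ (K - 1)) := by gcongr
    _ = r ^ K + K * (r / (r - ((K : ℝ) - 1) * s₀)) * s * r ^ (K - 1) := by ring

lemma one_div_sqrt_add_one_le {t : ℝ} (ht : 0 ≤ t) : 1 / √(t + 1) ≤ 2 * (√(t + 1) - √t) := by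
  have hv : 0 < √(t + 1) := Real.sqrt_pos.2 (by linarith)
  have hu2 := Real.sq_sqrt ht
  have hv2 := Real.sq_sqrt (show 0 ≤ t + 1 by linarith)
  rw [div_le_iff₀ hv]
  nlinarith [sq_nonneg (√(t + 1) - √t)]

lemma sum_one_div_sqrt_le (A : Finset ℕ) (hA : ∀ j ∈ A, 1 ≤ j) :
    ∑ j ∈ A, 1 / √(j : ℝ) ≤ 2 * √(#A : ℝ) := by
  induction A using Finset.induction_on_max with
  | empty => simp
  | insert a s hlt ih =>
    have ha : a ∉ s := fun h => lt_irrefl a (hlt a h)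
    have hcard : #s + 1 ≤ a := by
      have := card_le_card (fun j hj => mem_Ico.2 ⟨hA j (mem_insert_of_mem hj), hlt j hj⟩ :
        s ⊆ Ico 1 a)
      have := hA a (mem_insert_self a s)
      simp only [Nat.card_Ico] at *
      omega
    have hlast : 1 / √(a : ℝ) ≤ 1 / √((#s : ℝ) + 1) :=
      one_div_le_one_div_of_le (Real.sqrt_pos.2 (by positivity))
        (Real.sqrt_le_sqrt (by exact_mod_cast hcard))
    have := ih fun j hj => hA j (mem_insert_of_mem hj)
    have := one_div_sqrt_add_one_le (Nat.cast_nonneg (α := ℝ) #s)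
    rw [sum_insert ha, card_insert_of_notMem ha]
    push_cast
    linarith

lemma two_sqrt_add_sub_div_sqrt_le {a b : ℝ} (ha : 0 ≤ a) (hb : 0 < b) :
    2 * √a + (b - a) / √b ≤ 2 * √b := by
  have hsb : 0 < √b := Real.sqrt_pos.2 hb
  rw [← Real.sq_sqrt ha, ← Real.sq_sqrt hb.le, Real.sqrt_sq hsb.le, Real.sqrt_sq (by positivity),
    ← sub_nonneg]
  have : 2 * √b - (2 * √a + (√b ^ 2 - √a ^ 2) / √b) = (√b - √a) ^ 2 / √b := by
    field_simp; ring
  rw [this]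
  positivity

lemma abs_le_l2 {d : ℕ} (x : Fin d → ℝ) (i : Fin d) : |x i| ≤ l2 x := by
  rw [l2, ← Real.sqrt_sq_eq_abs]
  exact Real.sqrt_le_sqrt
    (single_le_sum (f := fun i => x i ^ 2) (fun i _ => sq_nonneg _) (mem_univ i))

lemma abs_dot_le_l2_mul_l1 {d : ℕ} (x v : Fin d → ℝ) : |∑ i, x i * v i| ≤ l2 x * l1 v := by
  rw [l1, mul_sum]
  calc |∑ i, x i * v i| ≤ ∑ i, |x i| * |v i| := by
        simpa only [abs_mul] using abs_sum_le_sum_abs (fun i => x i * v i) univ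
    _ ≤ ∑ i, l2 x * |v i| := by gcongr with i; exact abs_le_l2 x i

lemma abs_dot_le_l2_mul_l2 {d : ℕ} (x v : Fin d → ℝ) : |∑ i, x i * v i| ≤ l2 x * l2 v := by
  rw [l2, l2, ← Real.sqrt_mul (by positivity), ← Real.sqrt_sq_eq_abs]
  exact Real.sqrt_le_sqrt (sum_mul_sq_le_sq_mul_sq _ _ _)

lemma abs_dot_sub_dot_le {d : ℕ} {x u v : Fin d → ℝ} {bx L : ℝ} (hx : l2 x ≤ bx)
    (huv : l1 (u - v) ≤ L) : |∑ i, x i * u i - ∑ i, x i * v i| ≤ bx * L := by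
  have hL : 0 ≤ l1 (u - v) := by rw [l1]; positivity
  rw [← sum_sub_distrib]
  simp only [← mul_sub, ← Pi.sub_apply]
  exact (abs_dot_le_l2_mul_l1 x (u - v)).trans
    (mul_le_mul hx huv hL ((Real.sqrt_nonneg _).trans hx))

lemma abs_dot_sub_le {d : ℕ} {x v : Fin d → ℝ} {bx Cx : ℝ} (B' : ℝ) (hx : l2 x ≤ bx)
    (hv : l2 v ≤ Cx) : |∑ i, x i * v i - B'| ≤ bx * Cx + |B'| :=
  (abs_sub _ _).trans <| add_le_add ((abs_dot_le_l2_mul_l2 x v).trans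
    (mul_le_mul hx hv (Real.sqrt_nonneg _) ((Real.sqrt_nonneg _).trans hx))) le_rfl

lemma abs_dot_sub_dot_le_of_l1_le_add_pow {d K : ℕ} (hK : 1 ≤ K) {x u v : Fin d → ℝ}
    {bx c₁ r s s₀ : ℝ} (hx : l2 x ≤ bx) (hc₁ : 0 ≤ c₁) (hr : 0 ≤ r) (hs : 0 ≤ s)
    (hss₀ : s ≤ s₀) (hs₀ : ((K : ℝ) - 1) * s₀ < r) (huv : l1 (u - v) ≤ c₁ * (r + s) ^ K) :
    |∑ i, x i * u i - ∑ i, x i * v i|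
      ≤ c₁ * bx * r ^ K + K * r ^ (K - 1) * (bx * c₁ * (r / (r - ((K : ℝ) - 1) * s₀))) * s :=
  (abs_dot_sub_dot_le hx (huv.trans (mul_le_mul_of_nonneg_left
    (add_pow_le_pow_add_mul hK hr hs hss₀ hs₀) hc₁))).trans_eq (by ring)

lemma subset_Ioc_of_inter_Icc_eq_empty {J : Finset ℕ} {N₀ n : ℕ} (hJ : J ⊆ Icc 1 n)
    (hJN₀ : J ∩ Icc 1 N₀ = ∅) : J ⊆ Ioc N₀ n := by
  intro j hj
  have hjN₀ : j ∉ Icc 1 N₀ := fun h => by simpa [hJN₀] using mem_inter.2 ⟨hj, h⟩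
  have hjn := mem_Icc.1 (hJ hj)
  simp only [mem_Icc, mem_Ioc] at hjN₀ ⊢
  omega

section Readout

variable {J : Finset ℕ} {z : ℕ → ℝ} {y B' A G Q : ℝ} {m : ℕ}

lemma abs_sum_sub_le (hG : 0 ≤ G) (hpos : ∀ j ∈ J, 1 ≤ j)
    (herr : ∀ j ∈ J, |y - z j| ≤ A + G / √(j : ℝ)) :
    |∑ j ∈ J, (y - z j)| ≤ #J * A + G * (2 * √(#J : ℝ)) :=
  calc |∑ j ∈ J, (y - z j)| ≤ ∑ j ∈ J, (A + G * (1 / √(j : ℝ))) := by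
        refine (abs_sum_le_sum_abs _ _).trans (sum_le_sum fun j hj => ?_)
        simpa only [mul_one_div] using herr j hj
    _ = #J * A + G * ∑ j ∈ J, 1 / √(j : ℝ) := by
        rw [sum_add_distrib, sum_const, nsmul_eq_mul, mul_sum]
    _ ≤ #J * A + G * (2 * √(#J : ℝ)) := by gcongr; exact sum_one_div_sqrt_le J hpos

lemma abs_mul_sub_sum_le_of_le_card (hmJ : m ≤ #J) (hG : 0 ≤ G) (hpos : ∀ j ∈ J, 1 ≤ j)
    (herr : ∀ j ∈ J, |y - z j| ≤ A + G / √(j : ℝ)) (hz : ∀ j ∈ J, |z j - B'| ≤ Q) :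
    |m * (y - B') - ∑ j ∈ J, (z j - B')| ≤ m * A + G * (2 * √(m : ℝ)) + (#J - m) * Q := by
  obtain ⟨J₁, hJ₁, hcard⟩ := exists_subset_card_eq hmJ
  have hsplit : m * (y - B') - ∑ j ∈ J, (z j - B')
      = ∑ j ∈ J₁, (y - z j) - ∑ j ∈ J \ J₁, (z j - B') := by
    simp only [← sum_sdiff hJ₁, sum_sub_distrib, sum_const, nsmul_eq_mul, hcard]
    ring
  have hrest : |∑ j ∈ J \ J₁, (z j - B')| ≤ (#J - m) * Q := by
    rw [← hcard, ← Nat.cast_sub (card_le_card hJ₁), ← card_sdiff_of_subset hJ₁, ← nsmul_eq_mul,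
      ← sum_const]
    exact (abs_sum_le_sum_abs _ _).trans (sum_le_sum fun j hj => hz j (sdiff_subset hj))
  have hmain := abs_sum_sub_le (y := y) hG (fun j hj => hpos j (hJ₁ hj))
    (fun j hj => herr j (hJ₁ hj))
  rw [hcard] at hmain
  rw [hsplit]
  exact (abs_sub _ _).trans (add_le_add hmain hrest)

lemma abs_mul_sub_sum_le_of_card_le (hJm : #J ≤ m) (hm : 0 < m) (hG : 0 ≤ G)
    (hpos : ∀ j ∈ J, 1 ≤ j) (herr : ∀ j ∈ J, |y - z j| ≤ A + G / √(j : ℝ))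
    (href : |y - B'| ≤ A + G / √(m : ℝ) + Q) :
    |m * (y - B') - ∑ j ∈ J, (z j - B')| ≤ m * A + G * (2 * √(m : ℝ)) + (m - #J) * Q := by
  have hgap : (0 : ℝ) ≤ m - #J := sub_nonneg.2 (by exact_mod_cast hJm)
  have hsplit : m * (y - B') - ∑ j ∈ J, (z j - B')
      = ∑ j ∈ J, (y - z j) + (m - #J) * (y - B') := by
    rw [sum_sub_distrib, sum_sub_distrib, sum_const, sum_const, nsmul_eq_mul, nsmul_eq_mul]
    ring
  have hsqrt := two_sqrt_add_sub_div_sqrt_le (Nat.cast_nonneg #J) (Nat.cast_pos.2 hm)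
  rw [hsplit]
  calc |∑ j ∈ J, (y - z j) + (m - #J) * (y - B')|
      ≤ (#J * A + G * (2 * √(#J : ℝ))) + (m - #J) * (A + G / √(m : ℝ) + Q) := by
        refine (abs_add_le _ _).trans (add_le_add (abs_sum_sub_le hG hpos herr) ?_)
        rw [abs_mul, abs_of_nonneg hgap]
        exact mul_le_mul_of_nonneg_left href hgap
    _ = m * A + G * (2 * √(#J : ℝ) + (m - #J) / √(m : ℝ)) + (m - #J) * Q := by ring
    _ ≤ m * A + G * (2 * √(m : ℝ)) + (m - #J) * Q := by gcongr

lemma abs_sub_readout_le (hm : 0 < m) (hG : 0 ≤ G) (hQ : 0 ≤ Q) (hpos : ∀ j ∈ J, 1 ≤ j)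
    (herr : ∀ j ∈ J, |y - z j| ≤ A + G / √(j : ℝ)) (hz : ∀ j ∈ J, |z j - B'| ≤ Q)
    (href : |y - B'| ≤ A + G / √(m : ℝ) + Q) :
    |y - ((1 / m) * ∑ j ∈ J, (z j - B') + B')|
      ≤ A + 2 * G / √(m : ℝ) + |(#J : ℝ) - m| * Q / m := by
  have hmR : (0 : ℝ) < m := Nat.cast_pos.2 hm
  have hbound : |m * (y - B') - ∑ j ∈ J, (z j - B')|
      ≤ m * A + G * (2 * √(m : ℝ)) + |(#J : ℝ) - m| * Q := by
    rcases le_total m #J with hmJ | hJm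
    · refine (abs_mul_sub_sum_le_of_le_card hmJ hG hpos herr hz).trans ?_
      gcongr
      exact le_abs_self _
    · refine (abs_mul_sub_sum_le_of_card_le hJm hm hG hpos herr href).trans ?_
      gcongr
      rw [abs_sub_comm]
      exact le_abs_self _
  have hid : y - ((1 / m) * ∑ j ∈ J, (z j - B') + B')
      = (m * (y - B') - ∑ j ∈ J, (z j - B')) / m := by
    field_simp; ring
  have hsqrt : √(m : ℝ) * √(m : ℝ) = m := Real.mul_self_sqrt hmR.le
  rw [hid, abs_div, abs_of_pos hmR, div_le_iff₀ hmR]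
  calc _ ≤ m * A + G * (2 * √(m : ℝ)) + |(#J : ℝ) - m| * Q := hbound
    _ = (A + 2 * G / √(m : ℝ) + |(#J : ℝ) - m| * Q / m) * m := by
      field_simp
      linear_combination 2 * G * hsqrt

end Readout

lemma readout_rate_le {n K : ℕ} {p m r g Q : ℝ} (hn : 1 ≤ n) (hp : 0 < p) (hm : m = n * p - p / 2)
    (hr0 : 0 ≤ r) (hr1 : r ≤ 1) (hg : 0 ≤ g) (hQ : 0 ≤ Q) :
    2 * (K * r ^ (K - 1) * g) / √m + K * √(n * p) * r ^ K * Q / m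
      ≤ (2 * √2 * g + 2 * Q) / √p * K / √n * r ^ (K - 1) := by
  have hnR : (1 : ℝ) ≤ n := by exact_mod_cast hn
  have hnp : 0 < (n : ℝ) * p := by positivity
  have hm2 : n * p ≤ 2 * m := by rw [hm]; nlinarith
  have hm0 : 0 < m := by linarith
  have ht : √p * √n = √(n * p) := by rw [← Real.sqrt_mul hp.le, mul_comm]
  have ht0 : 0 < √(n * p) := Real.sqrt_pos.2 hnp
  have h1 : 1 / √m ≤ √2 / √(n * p) := by
    rw [div_le_div_iff₀ (Real.sqrt_pos.2 hm0) ht0, one_mul, ← Real.sqrt_mul zero_le_two]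
    exact Real.sqrt_le_sqrt hm2
  have h2 : √(n * p) / m ≤ 2 / √(n * p) := by
    rw [div_le_div_iff₀ hm0 ht0, Real.mul_self_sqrt hnp.le]
    linarith
  have hrK : r ^ K ≤ r ^ (K - 1) := pow_le_pow_of_le_one hr0 hr1 (Nat.sub_le K 1)
  calc 2 * (K * r ^ (K - 1) * g) / √m + K * √(n * p) * r ^ K * Q / m
      = 2 * (K * r ^ (K - 1) * g) * (1 / √m) + K * r ^ K * Q * (√(n * p) / m) := by ring
    _ ≤ 2 * (K * r ^ (K - 1) * g) * (√2 / √(n * p)) + K * r ^ (K - 1) * Q * (2 / √(n * p)) := by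
      gcongr
    _ = (2 * √2 * g + 2 * Q) / √p * K / √n * r ^ (K - 1) := by
      rw [← ht]
      field_simp

theorem stmt_18_general (d : ℕ)
    (βstar x : Fin d → ℝ) (bx : ℝ) (hx : l2 x ≤ bx)
    (y c₁ : ℝ) (hy : y = ∑ i, x i * βstar i) (hc₁ : c₁ = l1 βstar)
    (K : ℕ) (hK : 1 ≤ K)
    (γ : ℝ) (hγ0 : 0 < γ)
    (r : ℝ) (hr : r = 1 - (2 / 3) * γ)
    (S : ℕ) (hS : 1 ≤ S) (c : ℝ) (δ : ℝ)
    (b : ℝ)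
    (hb : b = 2 * γ * (2 * (S : ℝ) - 1)
        * Real.sqrt ((Real.log d + Real.log S - Real.log δ) / c))
    (n N₀ : ℕ) (hN₀ : 1 ≤ N₀) (hnN₀ : N₀ < n)
    (p : ℝ) (hp0 : 0 < p)
    (m : ℕ) (hm : (m : ℝ) = (n : ℝ) * p - p / 2) (hm1 : 1 ≤ m) (hmn : m ≤ n - N₀)
    (Cx : ℝ) (β : ℕ → Fin d → ℝ)
    (hβnorm : ∀ j ∈ Finset.Icc 1 n, l2 (β j) ≤ Cx)
    (ha : ∀ j : ℕ, N₀ < j → j ≤ n →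
      l1 (βstar - β j) ≤ c₁ * (r + b / Real.sqrt j) ^ K)
    (hKb : ((K : ℝ) - 1) * b / Real.sqrt N₀ < r)
    (η : ℝ) (hη : η = r / (r - ((K : ℝ) - 1) * b / Real.sqrt N₀))
    (ε : ℝ) (hε : ε = (K : ℝ) * Real.sqrt ((n : ℝ) * p) * r ^ K)
    (B' : ℝ) (J : Finset ℕ)
    (hJ : J = (Finset.Icc 1 n).filter fun j => B' ≤ ∑ i, x i * β j i)
    (hJN₀ : J ∩ Finset.Icc 1 N₀ = ∅)
    (hJcard : |((J.card : ℝ)) - (m : ℝ)| ≤ ε)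
    (yhat : ℝ)
    (hyhat : yhat = (1 / (m : ℝ)) * (∑ j ∈ J, ((∑ i, x i * β j i) - B')) + B')
    (c₄ : ℝ)
    (hc₄ : c₄ = (2 * Real.sqrt 2 * bx * c₁ * η
          * (2 * γ * (2 * (S : ℝ) - 1)
              * Real.sqrt ((Real.log d + Real.log S - Real.log δ) / c))
        + 2 * bx * Cx + 2 * |B'|) / Real.sqrt p) :
    |y - yhat| ≤ c₁ * bx * r ^ K + (c₄ * (K : ℝ) / Real.sqrt n) * r ^ (K - 1) := by
  rw [mul_div_assoc] at hKb hη
  have hb0 : 0 ≤ b := hb ▸ mul_nonneg (mul_nonneg (by positivity)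
    (by linarith [(by exact_mod_cast hS : (1 : ℝ) ≤ S)])) (Real.sqrt_nonneg _)
  have hr0 : 0 < r :=
    (mul_nonneg (sub_nonneg.2 (by exact_mod_cast hK)) (by positivity)).trans_lt hKb
  have hη0 : 0 ≤ η := hη ▸ div_nonneg hr0.le (by linarith)
  have hbx : 0 ≤ bx := (Real.sqrt_nonneg _).trans hx
  have hc₁0 : 0 ≤ c₁ := by rw [hc₁, l1]; positivity
  set G := K * r ^ (K - 1) * (bx * c₁ * η * b)
  set Q := bx * Cx + |B'|
  have herr (j : ℕ) (hj : N₀ < j) (hjn : j ≤ n) :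
      |y - ∑ i, x i * β j i| ≤ c₁ * bx * r ^ K + G / √(j : ℝ) := by
    have hsj : b / √(j : ℝ) ≤ b / √(N₀ : ℝ) := by gcongr
    have := abs_dot_sub_dot_le_of_l1_le_add_pow hK hx hc₁0 hr0.le (by positivity) hsj hKb
      (ha j hj hjn)
    rw [← hy, ← hη] at this
    exact this.trans_eq (by ring)
  have hz (j : ℕ) (hj : j ∈ Icc 1 n) : |∑ i, x i * β j i - B'| ≤ Q :=
    abs_dot_sub_le B' hx (hβnorm j hj)
  have hzn := hz n (mem_Icc.2 ⟨by omega, le_rfl⟩)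
  have hJsub := subset_Ioc_of_inter_Icc_eq_empty (hJ ▸ filter_subset _ _) hJN₀
  have href : |y - B'| ≤ c₁ * bx * r ^ K + G / √(m : ℝ) + Q :=
    calc |y - B'| ≤ |y - ∑ i, x i * β n i| + |∑ i, x i * β n i - B'| := abs_sub_le _ _ _
      _ ≤ c₁ * bx * r ^ K + G / √(n : ℝ) + Q := add_le_add (herr n hnN₀ le_rfl) hzn
      _ ≤ c₁ * bx * r ^ K + G / √(m : ℝ) + Q := by gcongr; omega
  have hQ : 0 ≤ Q := (abs_nonneg _).trans hzn
  have hread := abs_sub_readout_le (z := fun j => ∑ i, x i * β j i) hm1 (by positivity) hQ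
    (fun j hj => by have := mem_Ioc.1 (hJsub hj); omega)
    (fun j hj => herr j (mem_Ioc.1 (hJsub hj)).1 (mem_Ioc.1 (hJsub hj)).2)
    (fun j hj => hz j (Ioc_subset_Icc_self (Ioc_subset_Ioc_left hN₀ (hJsub hj)))) href
  have hrate := readout_rate_le (K := K) (g := bx * c₁ * η * b) (by omega : 1 ≤ n) hp0 hm hr0.le
    (by rw [hr]; linarith) (by positivity) hQ
  have hc₄' : c₄ = (2 * √2 * (bx * c₁ * η * b) + 2 * Q) / √p := by rw [hc₄, ← hb]; ring
  rw [hyhat, hc₄']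
  calc _ ≤ c₁ * bx * r ^ K + 2 * G / √(m : ℝ) + |(#J : ℝ) - m| * Q / m := hread
    _ ≤ c₁ * bx * r ^ K + 2 * G / √(m : ℝ) + ε * Q / m := by gcongr
    _ ≤ _ := by rw [hε]; linarith

/-- error bound for the linear read-out prediction built by thresholded
averaging of the per-prefix LISTA-VM estimates. -/
theorem stmt_18 (d : ℕ) (hd : 0 < d)
    (βstar x : Fin d → ℝ) (bx : ℝ) (hx : l2 x ≤ bx)
    (y c₁ : ℝ) (hy : y = ∑ i, x i * βstar i) (hc₁ : c₁ = l1 βstar)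
    (K : ℕ) (hK : 1 ≤ K)
    (γ : ℝ) (hγ0 : 0 < γ) (hγ1 : γ < 3 / 2)
    (r : ℝ) (hr : r = 1 - (2 / 3) * γ)
    (S : ℕ) (hS : 1 ≤ S) (c : ℝ) (hc : 0 < c) (δ : ℝ) (hδ0 : 0 < δ) (hδ1 : δ < 1)
    (b : ℝ)
    (hb : b = 2 * γ * (2 * (S : ℝ) - 1)
        * Real.sqrt ((Real.log d + Real.log S - Real.log δ) / c))
    (n N₀ : ℕ) (hN₀ : 1 ≤ N₀) (hnN₀ : N₀ < n)
    (p : ℝ) (hp0 : 0 < p) (hp1 : p ≤ 1)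
    (m : ℕ) (hm : (m : ℝ) = (n : ℝ) * p - p / 2) (hm1 : 1 ≤ m) (hmn : m ≤ n - N₀)
    (Cx : ℝ) (β : ℕ → Fin d → ℝ)
    (hβnorm : ∀ j ∈ Finset.Icc 1 n, l2 (β j) ≤ Cx)
    (ha : ∀ j : ℕ, N₀ < j → j ≤ n →
      l1 (βstar - β j) ≤ c₁ * (r + b / Real.sqrt j) ^ K)
    (hKb : ((K : ℝ) - 1) * b / Real.sqrt N₀ < r)
    (η : ℝ) (hη : η = r / (r - ((K : ℝ) - 1) * b / Real.sqrt N₀))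
    (ε : ℝ) (hε : ε = (K : ℝ) * Real.sqrt ((n : ℝ) * p) * r ^ K)
    (B' : ℝ) (J : Finset ℕ)
    (hJ : J = (Finset.Icc 1 n).filter fun j => B' ≤ ∑ i, x i * β j i)
    (hJN₀ : J ∩ Finset.Icc 1 N₀ = ∅)
    (hJcard : |((J.card : ℝ)) - (m : ℝ)| ≤ ε)
    (yhat : ℝ)
    (hyhat : yhat = (1 / (m : ℝ)) * (∑ j ∈ J, ((∑ i, x i * β j i) - B')) + B')
    (c₄ : ℝ)
    (hc₄ : c₄ = (2 * Real.sqrt 2 * bx * c₁ * η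
          * (2 * γ * (2 * (S : ℝ) - 1)
              * Real.sqrt ((Real.log d + Real.log S - Real.log δ) / c))
        + 2 * bx * Cx + 2 * |B'|) / Real.sqrt p) :
    |y - yhat| ≤ c₁ * bx * r ^ K + (c₄ * (K : ℝ) / Real.sqrt n) * r ^ (K - 1) :=
  stmt_18_general d βstar x bx hx y c₁ hy hc₁ K hK γ hγ0 r hr S hS c δ b hb n N₀ hN₀ hnN₀ p hp0 m hm
    hm1 hmn Cx β hβnorm ha hKb η hη ε hε B' J hJ hJN₀ hJcard yhat hyhat c₄ hc₄
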